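/- arXiv:2510.26079 — 2 statements merged into one kernel-verified Lean document; each statement's English description precedes it below -/
import Mathlib

section
/- Let m and e be integers with e ≥ 0. Then the tetrahedral index satisfies I_Δ(m,e) = (u^{-m·e}/(q;q)_e) · Σ_{n=0}^{∞} (-1)^n q^{n(n-1)/2 + n(1-m)} / ((q;q)_n · (q^{e+1};q)_n), where the series on the right converges absolutely. (This identifies I_Δ(m,e) with q^{-me/2}/(q;q)_e times the basic hypergeometric series ₁φ₁(0; q^{e+1}; q, q^{1-m}), i.e., with the Hahn–Exton q-Bessel function value J_e(q^{-m/2}; q).) -/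
open scoped BigOperators

/-- Finite q-Pochhammer symbol `(a;q)_n = ∏_{i=0}^{n-1} (1 - a q^i)`. -/
noncomputable def qPoch (a q : ℂ) (n : ℕ) : ℂ :=
  ∏ i ∈ Finset.range n, (1 - a * q ^ i)

/-- Infinite q-Pochhammer symbol `(a;q)_∞ = ∏_{i=0}^{∞} (1 - a q^i)`. -/
noncomputable def qPochInf (a q : ℂ) : ℂ :=
  ∏' i : ℕ, (1 - a * q ^ i)

/-- The `n`-th term of the series defining the tetrahedral index `I_Δ(m,e)`,
with `q = u^2` and vanishing below `e₊ = max(-e,0)`. -/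
noncomputable def tetTerm (u : ℂ) (m e : ℤ) (n : ℕ) : ℂ :=
  if (-e).toNat ≤ n then
    (-1 : ℂ) ^ n * u ^ ((n : ℤ) * ((n : ℤ) + 1) - (2 * (n : ℤ) + e) * m) /
      (qPoch (u ^ 2) (u ^ 2) n * qPoch (u ^ 2) (u ^ 2) ((n : ℤ) + e).toNat)
  else 0

/-- The tetrahedral index `I_Δ(m,e) = Σ_{n=e₊}^∞ (-1)^n u^{n(n+1)-(2n+e)m}/((q;q)_n (q;q)_{n+e})`. -/
noncomputable def tetIndex (u : ℂ) (m e : ℤ) : ℂ := ∑' n : ℕ, tetTerm u m e n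

private lemma qPoch_succ (a q : ℂ) (n : ℕ) :
    qPoch a q (n + 1) = qPoch a q n * (1 - a * q ^ n) :=
  Finset.prod_range_succ _ _

private lemma qPoch_add (a q : ℂ) (s n : ℕ) :
    qPoch a q (s + n) = qPoch a q s * qPoch (a * q ^ s) q n := by
  unfold qPoch
  rw [Finset.prod_range_add]
  congr 1
  refine Finset.prod_congr rfl fun i _ => ?_
  rw [pow_add]; ring

private lemma qPoch_ne_zero {a q : ℂ} (h : ∀ i : ℕ, ‖a * q ^ i‖ < 1) (n : ℕ) :
    qPoch a q n ≠ 0 := by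
  refine Finset.prod_ne_zero_iff.mpr fun i _ hzero => ?_
  have h1 : a * q ^ i = 1 := by linear_combination -hzero
  have h2 := h i
  rw [h1, norm_one] at h2
  exact lt_irrefl _ h2

private lemma qPoch_norm_ge {a q : ℂ} {t : ℝ} (ht : t ≤ 1) (h : ∀ i : ℕ, ‖a * q ^ i‖ ≤ t)
    (n : ℕ) : (1 - t) ^ n ≤ ‖qPoch a q n‖ := by
  unfold qPoch
  rw [norm_prod]
  calc (1 - t) ^ n = ∏ _i ∈ Finset.range n, (1 - t) := by
        rw [Finset.prod_const, Finset.card_range]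
    _ ≤ ∏ i ∈ Finset.range n, ‖1 - a * q ^ i‖ := by
        apply Finset.prod_le_prod
        · intro i _; linarith
        · intro i _
          calc 1 - t ≤ ‖(1:ℂ)‖ - ‖a * q ^ i‖ := by rw [norm_one]; linarith [h i]
            _ ≤ ‖1 - a * q ^ i‖ := norm_sub_norm_le _ _

private lemma tri_succ (n : ℕ) : (n+1)*((n+1)-1)/2 = n*(n-1)/2 + n := by
  cases n with
  | zero => rfl
  | succ k =>
    have hev : 2 ∣ (k+1) * k := by
      have := (Nat.even_mul_succ_self k).two_dvd
      rwa [mul_comm] at this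
    simp only [Nat.add_sub_cancel]
    have h1 : (k+1+1)*(k+1) = (k+1)*k + (k+1)*2 := by ring
    rw [h1, Nat.add_mul_div_right _ _ (by norm_num : 0 < 2)]

private lemma tri_cast (n : ℕ) : ((n*(n-1)/2 : ℕ) : ℤ) * 2 = (n:ℤ) * ((n:ℤ) - 1) := by
  cases n with
  | zero => simp
  | succ k =>
    have hev : 2 ∣ (k+1) * k := by
      have := (Nat.even_mul_succ_self k).two_dvd
      rwa [mul_comm] at this
    have h1 : (k+1)*((k+1)-1)/2*2 = (k+1)*k := by
      simp only [Nat.add_sub_cancel]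
      exact Nat.div_mul_cancel hev
    have h2 := congrArg (Nat.cast : ℕ → ℤ) h1
    push_cast at h2 ⊢
    linear_combination h2

/-- for `e ≥ 0`, `I_Δ(m,e)` equals `u^{-me}/(q;q)_e` times the absolutely
convergent series `Σ_n (-1)^n q^{n(n-1)/2 + n(1-m)}/((q;q)_n (q^{e+1};q)_n)`,
i.e. the `₁φ₁(0; q^{e+1}; q, q^{1-m})` expression (Hahn–Exton `J_e(q^{-m/2};q)`). -/
theorem stmt_0 (u : ℂ) (hu0 : 0 < ‖u‖) (hu1 : ‖u‖ < 1) (q : ℂ) (hq : q = u ^ 2)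
    (m e : ℤ) (he : 0 ≤ e) :
    Summable (fun n : ℕ =>
      ‖(-1 : ℂ) ^ n * q ^ (((n * (n - 1) / 2 : ℕ) : ℤ) + (n : ℤ) * (1 - m)) /
        (qPoch q q n * qPoch (q ^ (e + 1)) q n)‖) ∧
    tetIndex u m e =
      u ^ (-(m * e)) / qPoch q q e.toNat *
        ∑' n : ℕ, (-1 : ℂ) ^ n * q ^ (((n * (n - 1) / 2 : ℕ) : ℤ) + (n : ℤ) * (1 - m)) /
          (qPoch q q n * qPoch (q ^ (e + 1)) q n) := by
  have hu : u ≠ 0 := norm_pos_iff.mp hu0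
  have hqne : q ≠ 0 := by rw [hq]; exact pow_ne_zero _ hu
  set t : ℝ := ‖q‖ with htdef
  have ht0 : 0 < t := norm_pos_iff.mpr hqne
  have ht1 : t < 1 := by
    rw [htdef, hq, norm_pow]
    exact pow_lt_one₀ (norm_nonneg u) hu1 (by norm_num)
  set E : ℕ := e.toNat with hE
  have heE : (E : ℤ) = e := Int.toNat_of_nonneg he
  have hzp : q ^ (e + 1) = q ^ (E + 1) := by
    rw [← heE]; norm_cast
  simp only [hzp]
  have hb1 : ∀ i : ℕ, ‖q * q ^ i‖ ≤ t := by
    intro i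
    rw [norm_mul, norm_pow]
    calc t * t ^ i ≤ t * 1 :=
          mul_le_mul_of_nonneg_left (pow_le_one₀ ht0.le ht1.le) ht0.le
      _ = t := mul_one t
  have hb2 : ∀ i : ℕ, ‖q ^ (E+1) * q ^ i‖ ≤ t := by
    intro i
    rw [norm_mul, norm_pow, norm_pow, ← pow_add]
    calc t ^ (E + 1 + i) ≤ t ^ 1 := pow_le_pow_of_le_one ht0.le ht1.le (by omega)
      _ = t := pow_one t
  have hb1' : ∀ i, ‖q * q ^ i‖ < 1 := fun i => lt_of_le_of_lt (hb1 i) ht1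
  have hb2' : ∀ i, ‖q ^ (E+1) * q ^ i‖ < 1 := fun i => lt_of_le_of_lt (hb2 i) ht1
  have hPne : ∀ n, qPoch q q n ≠ 0 := qPoch_ne_zero hb1'
  have hQne : ∀ n, qPoch (q ^ (E+1)) q n ≠ 0 := qPoch_ne_zero hb2'
  have hPge : ∀ n, (1 - t) ^ n ≤ ‖qPoch q q n‖ := qPoch_norm_ge ht1.le hb1
  have hQge : ∀ n, (1 - t) ^ n ≤ ‖qPoch (q ^ (E+1)) q n‖ := qPoch_norm_ge ht1.le hb2
  have h1t : (0:ℝ) < 1 - t := by linarith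
  have hPpos : ∀ n, (0:ℝ) < ‖qPoch q q n‖ :=
    fun n => lt_of_lt_of_le (pow_pos h1t n) (hPge n)
  have hQpos : ∀ n, (0:ℝ) < ‖qPoch (q ^ (E+1)) q n‖ :=
    fun n => lt_of_lt_of_le (pow_pos h1t n) (hQge n)
  have hnorm : ∀ n : ℕ,
      ‖(-1 : ℂ) ^ n * q ^ (((n * (n - 1) / 2 : ℕ) : ℤ) + (n : ℤ) * (1 - m)) /
        (qPoch q q n * qPoch (q ^ (E+1)) q n)‖
      = t ^ (((n * (n - 1) / 2 : ℕ) : ℤ) + (n : ℤ) * (1 - m)) /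
        (‖qPoch q q n‖ * ‖qPoch (q ^ (E+1)) q n‖) := by
    intro n
    rw [norm_div, norm_mul, norm_mul, norm_pow, norm_neg, norm_one, one_pow, one_mul,
      norm_zpow]
  have hDsucc : ∀ n : ℕ,
      ((((n+1) * ((n+1) - 1) / 2 : ℕ)) : ℤ) + ((n+1 : ℕ) : ℤ) * (1 - m)
      = (((n * (n - 1) / 2 : ℕ) : ℤ) + (n : ℤ) * (1 - m)) + ((n:ℤ) + 1 - m) := by
    intro n
    rw [tri_succ n]
    push_cast
    ring
  -- eventual smallness of the ratio factor
  have htend : Filter.Tendsto (fun n : ℕ => t ^ ((n:ℤ) + 1 - m)) Filter.atTop (nhds 0) := by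
    have h1 : Filter.Tendsto (fun n : ℕ => t ^ n) Filter.atTop (nhds 0) :=
      tendsto_pow_atTop_nhds_zero_of_lt_one ht0.le ht1
    have h2 := h1.const_mul (t ^ ((1:ℤ) - m))
    rw [mul_zero] at h2
    refine h2.congr fun n => ?_
    rw [← zpow_natCast t n, ← zpow_add₀ (ne_of_gt ht0)]
    congr 1
    ring
  have hev : ∀ᶠ n : ℕ in Filter.atTop, t ^ ((n:ℤ) + 1 - m) < (1 - t)^2 / 2 :=
    htend.eventually_lt_const (by positivity)
  have hsum : Summable (fun n : ℕ =>
      ‖(-1 : ℂ) ^ n * q ^ (((n * (n - 1) / 2 : ℕ) : ℤ) + (n : ℤ) * (1 - m)) /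
        (qPoch q q n * qPoch (q ^ (E+1)) q n)‖) := by
    apply summable_of_ratio_norm_eventually_le (r := 1/2) (by norm_num)
    filter_upwards [hev] with n hn
    rw [Real.norm_of_nonneg (norm_nonneg _), Real.norm_of_nonneg (norm_nonneg _),
      hnorm (n+1), hnorm n, qPoch_succ, qPoch_succ, norm_mul, norm_mul,
      hDsucc n, zpow_add₀ (ne_of_gt ht0)]
    have hx : (1:ℝ) - t ≤ ‖(1:ℂ) - q * q ^ n‖ := by
      calc (1:ℝ) - t ≤ ‖(1:ℂ)‖ - ‖q * q ^ n‖ := by rw [norm_one]; linarith [hb1 n]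
        _ ≤ ‖(1:ℂ) - q * q ^ n‖ := norm_sub_norm_le _ _
    have hy : (1:ℝ) - t ≤ ‖(1:ℂ) - q ^ (E+1) * q ^ n‖ := by
      calc (1:ℝ) - t ≤ ‖(1:ℂ)‖ - ‖q ^ (E+1) * q ^ n‖ := by rw [norm_one]; linarith [hb2 n]
        _ ≤ ‖(1:ℂ) - q ^ (E+1) * q ^ n‖ := norm_sub_norm_le _ _
    have hxpos : (0:ℝ) < ‖(1:ℂ) - q * q ^ n‖ := lt_of_lt_of_le h1t hx
    have hypos : (0:ℝ) < ‖(1:ℂ) - q ^ (E+1) * q ^ n‖ := lt_of_lt_of_le h1t hy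
    have hApos : (0:ℝ) < t ^ (((n * (n - 1) / 2 : ℕ) : ℤ) + (n : ℤ) * (1 - m)) :=
      zpow_pos ht0 _
    have hspos : (0:ℝ) ≤ t ^ ((n:ℤ) + 1 - m) := le_of_lt (zpow_pos ht0 _)
    have hp := hPpos n
    have hr := hQpos n
    have key : t ^ ((n:ℤ) + 1 - m)
        ≤ 1/2 * (‖(1:ℂ) - q * q ^ n‖ * ‖(1:ℂ) - q ^ (E+1) * q ^ n‖) := by
      nlinarith [hx, hy, hn, h1t]
    calc t ^ (((n * (n - 1) / 2 : ℕ) : ℤ) + (n : ℤ) * (1 - m)) * t ^ ((n:ℤ) + 1 - m) /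
          (‖qPoch q q n‖ * ‖(1:ℂ) - q * q ^ n‖ *
            (‖qPoch (q ^ (E+1)) q n‖ * ‖(1:ℂ) - q ^ (E+1) * q ^ n‖))
        = (t ^ (((n * (n - 1) / 2 : ℕ) : ℤ) + (n : ℤ) * (1 - m)) /
            (‖qPoch q q n‖ * ‖qPoch (q ^ (E+1)) q n‖)) *
          (t ^ ((n:ℤ) + 1 - m) /
            (‖(1:ℂ) - q * q ^ n‖ * ‖(1:ℂ) - q ^ (E+1) * q ^ n‖)) := by
          field_simp
      _ ≤ (t ^ (((n * (n - 1) / 2 : ℕ) : ℤ) + (n : ℤ) * (1 - m)) /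
            (‖qPoch q q n‖ * ‖qPoch (q ^ (E+1)) q n‖)) * (1/2) := by
          apply mul_le_mul_of_nonneg_left _ (le_of_lt (by positivity))
          rw [div_le_iff₀ (by positivity)]
          linarith [key]
      _ = 1/2 * (t ^ (((n * (n - 1) / 2 : ℕ) : ℤ) + (n : ℤ) * (1 - m)) /
            (‖qPoch q q n‖ * ‖qPoch (q ^ (E+1)) q n‖)) := by ring
  refine ⟨hsum, ?_⟩
  have hterm : ∀ n : ℕ, tetTerm u m e n =
      (u ^ (-(m * e)) / qPoch q q E) *
        ((-1 : ℂ) ^ n * q ^ (((n * (n - 1) / 2 : ℕ) : ℤ) + (n : ℤ) * (1 - m)) /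
          (qPoch q q n * qPoch (q ^ (E+1)) q n)) := by
    intro n
    simp only [tetTerm]
    rw [if_pos (show (-e).toNat ≤ n by omega)]
    have h1 : ((n:ℤ) + e).toNat = E + n := by omega
    rw [h1, ← hq, qPoch_add, show q * q ^ E = q ^ (E+1) from (pow_succ' q E).symm]
    have hA : u ^ ((n : ℤ) * ((n : ℤ) + 1) - (2 * (n : ℤ) + e) * m)
        = u ^ (-(m * e)) * q ^ (((n * (n - 1) / 2 : ℕ) : ℤ) + (n : ℤ) * (1 - m)) := by
      rw [hq, show (u^2 : ℂ) = u ^ (2:ℤ) from rfl, ← zpow_mul, ← zpow_add₀ hu]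
      congr 1
      rw [← heE]
      linear_combination -tri_cast n
    rw [hA]
    have h2 := hPne n
    have h3 := hQne n
    have h4 := hPne E
    field_simp
  rw [tetIndex, tsum_congr hterm, tsum_mul_left]
end

section
/- For every integer k, the series Σ_{n=0}^{∞} (-q^{-k})^n · I_Δ(k-n-1, k+n) converges and equals u^{k} · I_Δ(k, k), where u plays the role of q^{1/2} (so u^{k} = q^{k/2}). -/
open scoped BigOperators

/-!
Expanding each `I_Δ(k-n-1, k+n)` into its defining series turns the left-hand side into a double
series over `(n, j)`. Since `‖(q;q)_n‖ ≥ (‖q‖;‖q‖)_∞ > 0`, its terms are `O(‖u‖^(n+j))`, so it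
converges absolutely and may be summed along the antidiagonals `n + j = m` instead. There the
`(n, j)` term is the `m`-th term of `u^k I_Δ(k,k)` times `(q;q)_m q^j / (q;q)_j`, and the
telescoping identity `∑_{j ≤ m} q^j / (q;q)_j = 1 / (q;q)_m` collapses each antidiagonal.
-/

open Finset

theorem HasSum.sum_antidiagonal {α A : Type*} [AddCommMonoid α] [TopologicalSpace α]
    [ContinuousAdd α] [RegularSpace α] [AddCommMonoid A] [HasAntidiagonal A]
    {f : A × A → α} {a : α} (hf : HasSum f a) :
    HasSum (fun n ↦ ∑ p ∈ antidiagonal n, f p) a :=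
  (HasAntidiagonal.sigmaAntidiagonalEquivProd.hasSum_iff.mpr hf).sigma fun n ↦
    sum_coe_sort (antidiagonal n) f ▸ hasSum_fintype _

theorem qPoch_self_eq_prod (x : ℂ) (n : ℕ) :
    qPoch x x n = ∏ i ∈ range n, (1 - x ^ (i + 1)) :=
  prod_congr rfl fun i _ ↦ by rw [pow_succ']

section EulerFunction

variable {r : ℝ}

theorem summable_neg_pow_succ (hr₀ : 0 ≤ r) (hr₁ : r < 1) :
    Summable fun i : ℕ ↦ ‖-r ^ (i + 1)‖ := by
  simpa [abs_of_nonneg hr₀] using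
    (summable_nat_add_iff 1).mpr (summable_geometric_of_lt_one hr₀ hr₁)

theorem tprod_one_sub_pow_succ_pos (hr₀ : 0 ≤ r) (hr₁ : r < 1) :
    0 < ∏' i : ℕ, (1 - r ^ (i + 1)) := by
  have hfac : ∀ i : ℕ, 0 < 1 - r ^ (i + 1) := fun i ↦
    sub_pos.mpr (pow_lt_one₀ hr₀ hr₁ i.succ_ne_zero)
  refine lt_of_le_of_ne (tprod_nonneg fun i ↦ (hfac i).le) (Ne.symm ?_)
  simpa only [sub_eq_add_neg] using tprod_one_add_ne_zero_of_summable
    (fun i ↦ by simpa [sub_eq_add_neg] using (hfac i).ne') (summable_neg_pow_succ hr₀ hr₁)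

theorem tprod_one_sub_pow_succ_le_prod_range (hr₀ : 0 ≤ r) (hr₁ : r < 1) (n : ℕ) :
    ∏' i : ℕ, (1 - r ^ (i + 1)) ≤ ∏ i ∈ range n, (1 - r ^ (i + 1)) := by
  have hanti : Antitone fun n ↦ ∏ i ∈ range n, (1 - r ^ (i + 1)) :=
    antitone_nat_of_succ_le fun n ↦ by
      rw [prod_range_succ]
      exact mul_le_of_le_one_right
        (prod_nonneg fun i _ ↦ sub_nonneg.mpr (pow_le_one₀ hr₀ hr₁.le))
        (sub_le_self _ (pow_nonneg hr₀ _))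
  have hprod : Multipliable fun i : ℕ ↦ 1 - r ^ (i + 1) := by
    simpa only [sub_eq_add_neg] using
      Real.multipliable_one_add_of_summable (summable_neg_pow_succ hr₀ hr₁).of_norm
  exact hanti.le_of_tendsto hprod.hasProd.tendsto_prod_nat n

end EulerFunction

theorem tprod_one_sub_pow_succ_le_norm_qPoch {x : ℂ} (hx : ‖x‖ < 1) (n : ℕ) :
    ∏' i : ℕ, (1 - ‖x‖ ^ (i + 1)) ≤ ‖qPoch x x n‖ := by
  refine (tprod_one_sub_pow_succ_le_prod_range (norm_nonneg x) hx n).trans ?_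
  rw [qPoch_self_eq_prod, norm_prod]
  refine prod_le_prod (fun i _ ↦ sub_nonneg.mpr (pow_le_one₀ (norm_nonneg x) hx.le))
    fun i _ ↦ ?_
  simpa using norm_sub_norm_le (1 : ℂ) (x ^ (i + 1))

theorem qPoch_self_ne_zero {x : ℂ} (hx : ‖x‖ < 1) (n : ℕ) : qPoch x x n ≠ 0 :=
  norm_pos_iff.mp <| (tprod_one_sub_pow_succ_pos (norm_nonneg x) hx).trans_le
    (tprod_one_sub_pow_succ_le_norm_qPoch hx n)

theorem sum_range_pow_div_qPoch_self {x : ℂ} (hx : ∀ n, qPoch x x n ≠ 0) (N : ℕ) :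
    ∑ j ∈ range (N + 1), x ^ j / qPoch x x j = 1 / qPoch x x N := by
  induction N with
  | zero => simp [qPoch]
  | succ N ih =>
    have hsucc : qPoch x x (N + 1) = qPoch x x N * (1 - x ^ (N + 1)) := by
      rw [qPoch_self_eq_prod, qPoch_self_eq_prod, prod_range_succ]
    have hN := hx N
    have hfac : 1 - x ^ (N + 1) ≠ 0 := right_ne_zero_of_mul (hsucc ▸ hx (N + 1))
    rw [sum_range_succ, ih, hsucc]
    field_simp
    ring

theorem norm_sq_lt_one {u : ℂ} (hu : ‖u‖ < 1) : ‖u ^ 2‖ < 1 := by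
  simpa using pow_lt_one₀ (norm_nonneg u) hu two_ne_zero

theorem norm_tetTerm_le {u : ℂ} (hu : ‖u‖ < 1) (m e : ℤ) (n : ℕ) :
    ‖tetTerm u m e n‖ ≤ ‖u‖ ^ ((n : ℤ) * (n + 1) - (2 * n + e) * m) /
      (∏' i : ℕ, (1 - ‖u ^ 2‖ ^ (i + 1))) ^ 2 := by
  have hq := norm_sq_lt_one hu
  have hP := tprod_one_sub_pow_succ_le_norm_qPoch hq
  set c := ∏' i : ℕ, (1 - ‖u ^ 2‖ ^ (i + 1))
  have hc : 0 < c := tprod_one_sub_pow_succ_pos (norm_nonneg (u ^ 2)) hq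
  unfold tetTerm
  split_ifs
  · rw [norm_div, norm_mul, norm_mul, norm_pow, norm_neg, norm_one, one_pow, one_mul, norm_zpow]
    refine div_le_div_of_nonneg_left (by positivity) (by positivity) ?_
    rw [sq c]
    exact mul_le_mul (hP _) (hP _) hc.le (norm_nonneg _)
  · rw [norm_zero]
    positivity

noncomputable def tetDoubleTerm (u : ℂ) (k : ℤ) (p : ℕ × ℕ) : ℂ :=
  (-((u ^ 2) ^ (-k))) ^ p.1 * tetTerm u (k - p.1 - 1) (k + p.1) p.2

theorem neg_sq_zpow_neg_pow {K : Type*} [DivisionRing K] (u : K) (k : ℤ) (n : ℕ) :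
    (-((u ^ 2) ^ (-k))) ^ n = (-1) ^ n * u ^ (-(2 * k * n)) := by
  rw [neg_pow, ← zpow_natCast ((u ^ 2) ^ (-k)), ← zpow_mul, ← zpow_ofNat, ← zpow_mul]
  ring_nf

theorem tetDoubleTerm_eq {u : ℂ} (hu₀ : u ≠ 0) (hu₁ : ‖u‖ < 1) (k : ℤ) (n j : ℕ) :
    tetDoubleTerm u k (n, j) = u ^ k * tetTerm u k k (n + j) * qPoch (u ^ 2) (u ^ 2) (n + j) *
      ((u ^ 2) ^ j / qPoch (u ^ 2) (u ^ 2) j) := by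
  have hq := norm_sq_lt_one hu₁
  have hm := qPoch_self_ne_zero hq (n + j)
  have hs : ((j : ℤ) + (k + n)).toNat = (((n + j : ℕ) : ℤ) + k).toNat := by push_cast; omega
  unfold tetDoubleTerm tetTerm
  simp only [hs]
  by_cases h : (-k).toNat ≤ n + j
  · set P := qPoch (u ^ 2) (u ^ 2)
    rw [if_pos (by omega), if_pos h, neg_sq_zpow_neg_pow, ← zpow_natCast (u ^ 2), ← zpow_ofNat,
      ← zpow_mul]
    have hexp : -(2 * k * n) + ((j : ℤ) * (j + 1) - (2 * j + (k + n)) * (k - n - 1)) =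
        k + (((n + j : ℕ) : ℤ) * ((n + j : ℕ) + 1) - (2 * (n + j : ℕ) + k) * k) +
          2 * j := by
      push_cast
      ring
    calc _ = (-1) ^ (n + j) *
          u ^ (-(2 * k * n) + ((j : ℤ) * (j + 1) - (2 * j + (k + n)) * (k - n - 1))) /
          (P j * P (((n + j : ℕ) : ℤ) + k).toNat) := by
          rw [zpow_add₀ hu₀, pow_add]
          ring
      _ = _ := by
          rw [hexp, zpow_add₀ hu₀, zpow_add₀ hu₀]
          field_simp
  · rw [if_neg (by omega), if_neg h]
    simp

theorem norm_tetDoubleTerm_le {u : ℂ} (hu₀ : u ≠ 0) (hu₁ : ‖u‖ < 1) (k : ℤ)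
    (n j : ℕ) : ‖tetDoubleTerm u k (n, j)‖ ≤ ‖u‖ ^ (k - 2 * k ^ 2) /
      (∏' i : ℕ, (1 - ‖u ^ 2‖ ^ (i + 1))) ^ 2 * (‖u‖ ^ n * ‖u‖ ^ j) := by
  have hr : 0 < ‖u‖ := norm_pos_iff.mpr hu₀
  set c := ∏' i : ℕ, (1 - ‖u ^ 2‖ ^ (i + 1))
  rw [tetDoubleTerm, norm_mul, neg_sq_zpow_neg_pow, norm_mul, norm_pow, norm_neg, norm_one,
    one_pow, one_mul, norm_zpow]
  calc ‖u‖ ^ (-(2 * k * n)) * ‖tetTerm u (k - n - 1) (k + n) j‖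
      ≤ ‖u‖ ^ (-(2 * k * n)) *
          (‖u‖ ^ ((j : ℤ) * (j + 1) - (2 * j + (k + n)) * (k - n - 1)) / c ^ 2) := by
        gcongr
        exact norm_tetTerm_le hu₁ _ _ j
    _ = ‖u‖ ^ (-(2 * k * n) + ((j : ℤ) * (j + 1) - (2 * j + (k + n)) * (k - n - 1))) /
          c ^ 2 := by
        rw [zpow_add₀ hr.ne']
        ring
    _ ≤ ‖u‖ ^ (k - 2 * k ^ 2 + n + j) / c ^ 2 := by
        gcongr ?_ / _
        refine zpow_le_zpow_right_of_le_one₀ hr hu₁.le ?_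
        -- the left exponent exceeds the right one by `(n + j - k) ^ 2 + j`
        nlinarith [sq_nonneg ((n : ℤ) + j - k)]
    _ = _ := by
        rw [zpow_add₀ hr.ne', zpow_add₀ hr.ne', zpow_natCast, zpow_natCast]
        ring

theorem summable_tetDoubleTerm {u : ℂ} (hu₀ : u ≠ 0) (hu₁ : ‖u‖ < 1) (k : ℤ) :
    Summable (tetDoubleTerm u k) := by
  have hgeom := summable_geometric_of_lt_one (norm_nonneg u) hu₁
  refine Summable.of_norm_bounded
    (((hgeom.mul_of_nonneg hgeom (fun _ ↦ by positivity) fun _ ↦ by positivity)).mul_left _)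
    fun p ↦ norm_tetDoubleTerm_le hu₀ hu₁ k p.1 p.2

theorem sum_antidiagonal_tetDoubleTerm {u : ℂ} (hu₀ : u ≠ 0) (hu₁ : ‖u‖ < 1) (k : ℤ)
    (m : ℕ) : ∑ p ∈ antidiagonal m, tetDoubleTerm u k p = u ^ k * tetTerm u k k m := by
  have hq := norm_sq_lt_one hu₁
  have hx := qPoch_self_ne_zero hq
  calc ∑ p ∈ antidiagonal m, tetDoubleTerm u k p
      = ∑ p ∈ antidiagonal m, u ^ k * tetTerm u k k m * qPoch (u ^ 2) (u ^ 2) m *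
          ((u ^ 2) ^ p.2 / qPoch (u ^ 2) (u ^ 2) p.2) :=
        sum_congr rfl fun p hp ↦ by
          rw [← mem_antidiagonal.mp hp]
          exact tetDoubleTerm_eq hu₀ hu₁ k p.1 p.2
    _ = u ^ k * tetTerm u k k m * qPoch (u ^ 2) (u ^ 2) m *
          ∑ j ∈ range (m + 1), (u ^ 2) ^ j / qPoch (u ^ 2) (u ^ 2) j := by
        rw [← mul_sum, Nat.antidiagonal_eq_map', sum_map]
        rfl
    _ = u ^ k * tetTerm u k k m := by
        rw [sum_range_pow_div_qPoch_self hx, mul_assoc, mul_one_div_cancel (hx m), mul_one]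

/-- `q^{k/2} I_Δ(k,k) = Σ_{n≥0} (-q^{-k})^n I_Δ(k-n-1, k+n)`, with `u = q^{1/2}`. -/
theorem stmt_16 (u : ℂ) (hu0 : 0 < ‖u‖) (hu1 : ‖u‖ < 1) (q : ℂ) (hq : q = u ^ 2)
    (k : ℤ) :
    Summable (fun n : ℕ => (-(q ^ (-k))) ^ n * tetIndex u (k - n - 1) (k + n)) ∧
    ∑' n : ℕ, (-(q ^ (-k))) ^ n * tetIndex u (k - n - 1) (k + n) =
      u ^ k * tetIndex u k k := by
  subst hq
  have hu₀ : u ≠ 0 := norm_pos_iff.mp hu0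
  have hF := summable_tetDoubleTerm hu₀ hu1 k
  have hrows : HasSum (fun n : ℕ ↦ (-((u ^ 2) ^ (-k))) ^ n * tetIndex u (k - n - 1) (k + n))
      (∑' p, tetDoubleTerm u k p) := by
    refine hF.hasSum.prod_fiberwise fun n ↦ ?_
    rw [tetIndex, ← tsum_mul_left]
    exact (hF.prod_factor n).hasSum
  have hdiag : HasSum (fun m : ℕ ↦ u ^ k * tetTerm u k k m) (∑' p, tetDoubleTerm u k p) := by
    simpa only [sum_antidiagonal_tetDoubleTerm hu₀ hu1] using hF.hasSum.sum_antidiagonal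
  refine ⟨hrows.summable, ?_⟩
  rw [hrows.tsum_eq, ← hdiag.tsum_eq, tsum_mul_left, tetIndex]
end
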